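/- Let T be an n-vertex tournament with minimum semidegree at least (1/4 − δ²)n, δ ∈ (0,1/2), that is not strongly connected, and let (A,B) be a directed cut. Then the number r of vertices v ∈ A with d⁻(v) ≥ (1/4 + 2δ)n satisfies r ≤ δn. -/
import Mathlib


open Finset

def IsTournament {V : Type*} (T : V → V → Prop) : Prop :=
  (∀ v, ¬ T v v) ∧ ∀ u v : V, u ≠ v → (T u v ↔ ¬ T v u)

def inDeg {V : Type*} [Fintype V] [DecidableEq V] (T : V → V → Prop) [DecidableRel T] (v : V) : ℕ :=
  (Finset.univ.filter (fun u => T u v)).card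

def outDeg {V : Type*} [Fintype V] [DecidableEq V] (T : V → V → Prop) [DecidableRel T] (v : V) : ℕ :=
  (Finset.univ.filter (fun u => T v u)).card

instance {V : Type*} (T : V → V → Prop) [DecidableRel T] :
    DecidablePred (fun p : V × V => T p.1 p.2) :=
  fun p => inferInstanceAs (Decidable (T p.1 p.2))

def eCount {V : Type*} (T : V → V → Prop) [DecidableRel T] (A B : Finset V) : ℕ :=
  ((A ×ˢ B).filter (fun p => T p.1 p.2)).card

def minSemidegree {V : Type*} [Fintype V] [DecidableEq V] (T : V → V → Prop) [DecidableRel T] : ℕ :=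
  if h : (Finset.univ : Finset V).Nonempty then
    Finset.univ.inf' h (fun v => min (inDeg T v) (outDeg T v))
  else 0

lemma double_count {V : Type*} [DecidableEq V] (T : V → V → Prop) [DecidableRel T]
    (hT : IsTournament T) (s : Finset V) :
    2 * (∑ v ∈ s, (s.filter (fun u => T u v)).card) + s.card = s.card * s.card := by
  have e1 : ∀ v, (s.filter (fun u => T u v)).card = ∑ u ∈ s, if T u v then 1 else 0 := by
    intro v; rw [Finset.card_filter]
  have e2 : (∑ v ∈ s, ∑ u ∈ s, if T u v then (1:ℕ) else 0)
      = ∑ v ∈ s, ∑ u ∈ s, if T v u then 1 else 0 := Finset.sum_comm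
  have e3 : s.card = ∑ v ∈ s, ∑ u ∈ s, if u = v then (1:ℕ) else 0 := by
    rw [Finset.sum_congr rfl (fun v hv => ?_)]
    · rw [Finset.sum_const, smul_eq_mul, mul_one]
    · simp [Finset.sum_ite_eq' s v (fun _ => (1:ℕ)), hv]
  have key : ∀ v ∈ s, ∀ u ∈ s,
      ((if T u v then (1:ℕ) else 0) + ((if T v u then 1 else 0) + (if u = v then 1 else 0))) = 1 := by
    intro v hv u hu
    rcases eq_or_ne u v with h | h
    · subst h; simp [hT.1 u]
    · rcases (hT.2 u v h) with hiff
      by_cases htuv : T u v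
      · simp [htuv, (hiff.1 htuv), h]
      · have : T v u := by
          by_contra hc
          exact htuv (hiff.2 hc)
        simp [htuv, this, h]
  calc 2 * (∑ v ∈ s, (s.filter (fun u => T u v)).card) + s.card
      = (∑ v ∈ s, ∑ u ∈ s, if T u v then 1 else 0)
        + ((∑ v ∈ s, ∑ u ∈ s, if T v u then 1 else 0)
        + (∑ v ∈ s, ∑ u ∈ s, if u = v then 1 else 0)) := by
        simp only [e1]; rw [← e2, ← e3]; ring
    _ = ∑ v ∈ s, ∑ u ∈ s, ((if T u v then 1 else 0) + ((if T v u then 1 else 0) + (if u = v then 1 else 0))) := by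
        rw [← Finset.sum_add_distrib, ← Finset.sum_add_distrib]
        refine Finset.sum_congr rfl fun v hv => ?_
        rw [← Finset.sum_add_distrib, ← Finset.sum_add_distrib]
    _ = ∑ v ∈ s, ∑ u ∈ s, 1 := by
        refine Finset.sum_congr rfl fun v hv => Finset.sum_congr rfl fun u hu => key v hv u hu
    _ = s.card * s.card := by simp [mul_comm]

lemma double_count' {V : Type*} [DecidableEq V] (T : V → V → Prop) [DecidableRel T]
    (hT : IsTournament T) (s : Finset V) :
    2 * (∑ v ∈ s, (s.filter (fun u => T v u)).card) + s.card = s.card * s.card := by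
  have : (∑ v ∈ s, (s.filter (fun u => T v u)).card) = ∑ v ∈ s, (s.filter (fun u => T u v)).card := by
    simp only [Finset.card_filter]
    exact Finset.sum_comm
  rw [this]; exact double_count T hT s

lemma arith_final (δ n a x S : ℝ) (hδ0 : 0 < δ) (hδ1 : δ < 1/2)
    (hn0 : 0 ≤ n) (hn2 : 2 ≤ n) (ha1 : 1 ≤ a) (hx0 : 0 ≤ x)
    (haub : a ≤ (1/2 + 2*δ^2) * n - 1)
    (hmain : x * ((1/4 + 2*δ) * n) + (a - x) * ((1/4 - δ^2) * n) ≤ S)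
    (hA2R : 2 * S + a = a * a) : x ≤ δ * n := by
  have h1 : (4*δ + 2*δ^2) * n * x ≤ a * (a - 1 - (1/2 - 2*δ^2) * n) := by
    nlinarith [hmain, hA2R]
  have h3 : a * (a - 1 - (1/2 - 2*δ^2) * n) ≤ a * (4*δ^2*n - 2) := by
    have h2 : a - 1 - (1/2 - 2*δ^2) * n ≤ 4*δ^2*n - 2 := by linarith
    exact mul_le_mul_of_nonneg_left h2 (by linarith)
  have h4 : a * (4*δ^2*n - 2) ≤ (1/2 + 2*δ^2) * n * (4*δ^2*n) := by
    have := mul_le_mul_of_nonneg_right (show a ≤ (1/2 + 2*δ^2) * n by linarith)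
      (mul_nonneg (by positivity : (0:ℝ) ≤ 4*δ^2) hn0)
    nlinarith [this, ha1]
  have h5 : (1/2 + 2*δ^2) * n * (4*δ^2*n) ≤ (4*δ + 2*δ^2) * n * (δ * n) := by
    nlinarith [mul_nonneg (mul_nonneg hn0 hn0)
      (mul_nonneg (sq_nonneg δ) (show (0:ℝ) ≤ 1 + δ - 4*δ^2 by nlinarith))]
  have hchain : (4*δ + 2*δ^2) * n * x ≤ (4*δ + 2*δ^2) * n * (δ * n) :=
    le_trans h1 (le_trans h3 (le_trans h4 h5))
  have hcpos : (0:ℝ) < (4*δ + 2*δ^2) * n :=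
    mul_pos (by nlinarith) (by linarith)
  nlinarith [hchain, hcpos]

theorem stmt_3 {V : Type*} [Fintype V] [DecidableEq V] (n : ℕ) (hn : Fintype.card V = n)
    (T : V → V → Prop) [DecidableRel T] (hT : IsTournament T)
    (δ : ℝ) (hδ0 : 0 < δ) (hδ1 : δ < 1/2)
    (hdeg : ∀ v : V, (1/4 - δ^2) * n ≤ (inDeg T v : ℝ) ∧ (1/4 - δ^2) * n ≤ (outDeg T v : ℝ))
    (hnsc : ¬ ∀ u v : V, Relation.ReflTransGen T u v)
    (A B : Finset V) (hdisj : Disjoint A B) (hunion : A ∪ B = Finset.univ)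
    (hA : A.Nonempty) (hB : B.Nonempty)
    (hcut : ∀ b ∈ B, ∀ a ∈ A, ¬ T b a) :
    ((A.filter (fun v => (1/4 + 2*δ) * n ≤ (inDeg T v : ℝ))).card : ℝ) ≤ δ * n := by
  classical
  have memAB : ∀ u : V, u ∉ A → u ∈ B := fun u h =>
    ((Finset.mem_union).1 (hunion ▸ Finset.mem_univ u)).resolve_left h
  have memBA : ∀ u : V, u ∉ B → u ∈ A := fun u h =>
    ((Finset.mem_union).1 (hunion ▸ Finset.mem_univ u)).resolve_right h
  have hab : A.card + B.card = n := by
    rw [← Finset.card_union_of_disjoint hdisj, hunion, Finset.card_univ, hn]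
  have hinA : ∀ v ∈ A, inDeg T v = (A.filter (fun u => T u v)).card := by
    intro v hv
    unfold inDeg
    congr 1
    ext u
    simp only [Finset.mem_filter, Finset.mem_univ, true_and]
    refine ⟨fun h => ⟨?_, h⟩, fun h => h.2⟩
    by_contra hu
    exact hcut u (memAB u hu) v hv h
  have houtB : ∀ v ∈ B, outDeg T v = (B.filter (fun u => T v u)).card := by
    intro v hv
    unfold outDeg
    congr 1
    ext u
    simp only [Finset.mem_filter, Finset.mem_univ, true_and]
    refine ⟨fun h => ⟨?_, h⟩, fun h => h.2⟩
    by_contra hu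
    exact hcut v hv u (memBA u hu) h
  -- double counts
  have hA2 : 2 * (∑ v ∈ A, inDeg T v) + A.card = A.card * A.card := by
    rw [Finset.sum_congr rfl hinA]; exact double_count T hT A
  have hB2 : 2 * (∑ v ∈ B, outDeg T v) + B.card = B.card * B.card := by
    rw [Finset.sum_congr rfl houtB]; exact double_count' T hT B
  -- real versions
  set a : ℝ := (A.card : ℝ) with ha_def
  set b : ℝ := (B.card : ℝ) with hb_def
  have habR : a + b = n := by rw [ha_def, hb_def]; exact_mod_cast hab
  have ha1 : (1:ℝ) ≤ a := by
    have : 1 ≤ A.card := Finset.card_pos.2 hA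
    rw [ha_def]; exact_mod_cast this
  have hb1 : (1:ℝ) ≤ b := by
    have : 1 ≤ B.card := Finset.card_pos.2 hB
    rw [hb_def]; exact_mod_cast this
  have hA2R : 2 * (∑ v ∈ A, (inDeg T v : ℝ)) + a = a * a := by
    rw [ha_def]; exact_mod_cast hA2
  have hB2R : 2 * (∑ v ∈ B, (outDeg T v : ℝ)) + b = b * b := by
    rw [hb_def]; exact_mod_cast hB2
  -- lower bound on sum over B
  have hSB : (1/4 - δ^2) * n * b ≤ ∑ v ∈ B, (outDeg T v : ℝ) := by
    have := Finset.card_nsmul_le_sum B (fun v => (outDeg T v : ℝ)) ((1/4 - δ^2) * n)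
      (fun v _ => (hdeg v).2)
    rw [nsmul_eq_mul] at this
    calc (1/4 - δ^2) * n * b = b * ((1/4 - δ^2) * n) := by ring
      _ ≤ _ := this
  -- hence b is large, a is small
  have hble : (1/2 - 2*δ^2) * n + 1 ≤ b := by nlinarith [hSB, hB2R, hb1]
  have haub : a ≤ (1/2 + 2*δ^2) * n - 1 := by
    have hn0 : (0:ℝ) ≤ n := Nat.cast_nonneg n
    nlinarith [hble, habR]
  -- split sum over A
  set P : V → Prop := fun v => (1/4 + 2*δ) * n ≤ (inDeg T v : ℝ) with hP
  set R : Finset V := A.filter P with hRdef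
  set R' : Finset V := A.filter (fun v => ¬ P v) with hR'def
  set x : ℝ := (R.card : ℝ) with hx_def
  set y : ℝ := (R'.card : ℝ) with hy_def
  have hxy : x + y = a := by
    rw [hx_def, hy_def, ha_def]
    exact_mod_cast Finset.card_filter_add_card_filter_not (p := P)
  have hsplit : (∑ v ∈ R, (inDeg T v : ℝ)) + (∑ v ∈ R', (inDeg T v : ℝ))
      = ∑ v ∈ A, (inDeg T v : ℝ) :=
    Finset.sum_filter_add_sum_filter_not A P _
  have hSR : x * ((1/4 + 2*δ) * n) ≤ ∑ v ∈ R, (inDeg T v : ℝ) := by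
    have := Finset.card_nsmul_le_sum R (fun v => (inDeg T v : ℝ)) ((1/4 + 2*δ) * n)
      (fun v hv => (Finset.mem_filter.1 hv).2)
    rw [nsmul_eq_mul] at this
    exact this
  have hSR' : y * ((1/4 - δ^2) * n) ≤ ∑ v ∈ R', (inDeg T v : ℝ) := by
    have := Finset.card_nsmul_le_sum R' (fun v => (inDeg T v : ℝ)) ((1/4 - δ^2) * n)
      (fun v _ => (hdeg v).1)
    rw [nsmul_eq_mul] at this
    exact this
  have hx0 : (0:ℝ) ≤ x := by rw [hx_def]; exact Nat.cast_nonneg _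
  have hy0 : (0:ℝ) ≤ y := by rw [hy_def]; exact Nat.cast_nonneg _
  have hn0 : (0:ℝ) ≤ n := Nat.cast_nonneg n
  have hmain : x * ((1/4 + 2*δ) * n) + (a - x) * ((1/4 - δ^2) * n)
      ≤ ∑ v ∈ A, (inDeg T v : ℝ) := by
    have hyeq : y = a - x := by linarith
    rw [← hyeq, ← hsplit]
    exact add_le_add hSR hSR'
  -- conclude
  show x ≤ δ * n
  exact arith_final δ n a x _ hδ0 hδ1 hn0 (by linarith) ha1 hx0 haub hmain hA2R
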